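/- Uniqueness of sparse representations under low coherence: if Q ∈ ℝ^{d×k} has unit-norm columns with mutual coherence M, and s, s' ∈ ℝ^k satisfy Qs = Qs' with ‖s‖₀ + ‖s'‖₀ < 1 + 1/M (assuming M > 0), then s = s'. -/

import Mathlib

open scoped RealInnerProductSpace

noncomputable def matCol {d k : ℕ} (Q : Matrix (Fin d) (Fin k) ℝ) (j : Fin k) :
    EuclideanSpace ℝ (Fin d) := WithLp.toLp 2 (fun i => Q i j)

noncomputable def mutualCoherenceU {d k : ℕ} (Q : Matrix (Fin d) (Fin k) ℝ) : ℝ :=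
  sSup {x : ℝ | ∃ i j : Fin k, i ≠ j ∧ x = |⟪matCol Q i, matCol Q j⟫|}

/-- Number of nonzero entries (the `ℓ₀` "norm"). -/
noncomputable def l0norm {k : ℕ} (s : Fin k → ℝ) : ℕ := (Finset.univ.filter fun j => s j ≠ 0).card

/-! A nonzero `x` with `Q x = 0` has a coefficient `x i` of maximal modulus. Pairing the relation
`∑ x j q_j = 0` with the unit vector `q_i` isolates `x i` against the other terms, each of size at
most `M |x i|`, so `|x i| ≤ (‖x‖₀ - 1) M |x i|`: every nonzero null vector has `1 + 1/M` nonzero entries.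
Applied to `x = s - s'`, whose support lies in the union of the supports of `s` and `s'`, this
contradicts the sparsity assumption unless `s = s'`. -/

open Finset

section UnitFamily

variable {ι E : Type*} [NormedAddCommGroup E] [InnerProductSpace ℝ E] {v : ι → E} {μ : ℝ}

theorem eq_neg_sum_erase_mul_inner_of_sum_smul_eq_zero [DecidableEq ι] {s : Finset ι}
    {x : ι → ℝ} (hx : ∑ j ∈ s, x j • v j = 0) {i : ι} (hi : i ∈ s) (hvi : ‖v i‖ = 1) :
    x i = -∑ j ∈ s.erase i, x j * ⟪v i, v j⟫ := by
  have h := congrArg (⟪v i, ·⟫) hx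
  simp only [inner_sum, real_inner_smul_right, inner_zero_right] at h
  rw [← add_sum_erase s _ hi, real_inner_self_eq_norm_sq, hvi] at h
  linarith

theorem one_le_card_sub_one_mul_of_sum_smul_eq_zero (hv : ∀ i, ‖v i‖ = 1)
    (hμ : ∀ i j, i ≠ j → |⟪v i, v j⟫| ≤ μ) {s : Finset ι} {x : ι → ℝ}
    (hx : ∑ j ∈ s, x j • v j = 0) (hxs : ∃ i ∈ s, x i ≠ 0) :
    1 ≤ ((#s : ℝ) - 1) * μ := by
  classical
  obtain ⟨i, hi, hmax⟩ := s.exists_max_image (|x ·|) (hxs.imp fun _ h => h.1)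
  have hxi : 0 < |x i| := by
    obtain ⟨j, hj, hxj⟩ := hxs
    exact (abs_pos.2 hxj).trans_le (hmax j hj)
  have key : |x i| ≤ ((#s : ℝ) - 1) * μ * |x i| := calc
    |x i| = |∑ j ∈ s.erase i, x j * ⟪v i, v j⟫| := by
      rw [eq_neg_sum_erase_mul_inner_of_sum_smul_eq_zero hx hi (hv i), abs_neg]
    _ ≤ ∑ j ∈ s.erase i, |x j * ⟪v i, v j⟫| := abs_sum_le_sum_abs _ _
    _ ≤ ∑ _j ∈ s.erase i, |x i| * μ := by
      refine sum_le_sum fun j hj => ?_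
      rw [abs_mul]
      exact mul_le_mul (hmax j (mem_of_mem_erase hj)) (hμ i j (ne_of_mem_erase hj).symm)
        (abs_nonneg _) (abs_nonneg _)
    _ = ((#s : ℝ) - 1) * μ * |x i| := by
      rw [sum_const, card_erase_of_mem hi, nsmul_eq_mul, Nat.cast_pred (card_pos.2 ⟨i, hi⟩)]
      ring
  exact le_of_mul_le_mul_right (by rwa [one_mul]) hxi

theorem one_add_inv_le_card_support_of_sum_smul_eq_zero [Fintype ι] (hv : ∀ i, ‖v i‖ = 1)
    (hμ : ∀ i j, i ≠ j → |⟪v i, v j⟫| ≤ μ) (hμ0 : 0 < μ) {x : ι → ℝ}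
    (hx : ∑ j, x j • v j = 0) (hx0 : x ≠ 0) :
    1 + 1 / μ ≤ (#{j | x j ≠ 0} : ℝ) := by
  classical
  have hsupp : ∑ j with x j ≠ 0, x j • v j = 0 := by
    rw [sum_filter_of_ne fun j _ h => left_ne_zero_of_smul h, hx]
  obtain ⟨i, hi⟩ := Function.ne_iff.1 hx0
  have h := one_le_card_sub_one_mul_of_sum_smul_eq_zero hv hμ hsupp ⟨i, by simpa using hi⟩
  have : 1 / μ ≤ (#{j | x j ≠ 0} : ℝ) - 1 := by
    rw [div_le_iff₀ hμ0]
    linarith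
  linarith

end UnitFamily

theorem abs_inner_matCol_le_mutualCoherenceU {d k : ℕ} (Q : Matrix (Fin d) (Fin k) ℝ)
    {i j : Fin k} (hij : i ≠ j) : |⟪matCol Q i, matCol Q j⟫| ≤ mutualCoherenceU Q := by
  refine le_csSup ((Set.finite_range fun p : Fin k × Fin k =>
    |⟪matCol Q p.1, matCol Q p.2⟫|).subset ?_).bddAbove ⟨i, j, hij, rfl⟩
  rintro _ ⟨i', j', -, rfl⟩
  exact ⟨(i', j'), rfl⟩

theorem toLp_mulVec_eq_sum_smul_matCol {d k : ℕ} (Q : Matrix (Fin d) (Fin k) ℝ)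
    (x : Fin k → ℝ) : WithLp.toLp 2 (Q.mulVec x) = ∑ j, x j • matCol Q j := by
  ext i
  simp [Matrix.mulVec, dotProduct, matCol, mul_comm]

theorem l0norm_sub_le {k : ℕ} (s s' : Fin k → ℝ) : l0norm (s - s') ≤ l0norm s + l0norm s' := by
  classical
  refine (card_le_card fun j => ?_).trans (card_union_le _ _)
  simp only [mem_filter, mem_univ, true_and, mem_union, Pi.sub_apply]
  contrapose!
  rintro ⟨hs, hs'⟩
  rw [hs, hs', sub_zero]

theorem sparse_representation_unique {d k : ℕ} (Q : Matrix (Fin d) (Fin k) ℝ)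
    (hunit : ∀ j, ‖matCol Q j‖ = 1) (hM : 0 < mutualCoherenceU Q)
    (s s' : Fin k → ℝ) (heq : Q.mulVec s = Q.mulVec s')
    (hsparse : (l0norm s : ℝ) + (l0norm s' : ℝ) < 1 + 1 / mutualCoherenceU Q) :
    s = s' := by
  by_contra hne
  have hnull : ∑ j, (s - s') j • matCol Q j = 0 := by
    rw [← toLp_mulVec_eq_sum_smul_matCol, Matrix.mulVec_sub, heq, sub_self, WithLp.toLp_zero]
  have hspark : 1 + 1 / mutualCoherenceU Q ≤ (l0norm (s - s') : ℝ) :=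
    one_add_inv_le_card_support_of_sum_smul_eq_zero hunit
      (fun _ _ => abs_inner_matCol_le_mutualCoherenceU Q) hM hnull (sub_ne_zero.2 hne)
  have hsub : (l0norm (s - s') : ℝ) ≤ l0norm s + l0norm s' := by
    exact_mod_cast l0norm_sub_le s s'
  linarith
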